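/- Let Φ be a reduced crystallographic simply-laced root system with base Δ, and let α ∈ Δ. Then every root δ whose α-coefficient satisfies c_α(δ) = 1 lies in the W_{Δ∖{α}}-orbit of α: there exists w in the subgroup of the Weyl group generated by the simple reflections s_γ for γ ∈ Δ∖{α} such that w(α) = δ. (Paper's Lemma: any root δ with δ(S_α) = −2 can be conjugated to −α using the Weyl group of the Levi L_α; equivalently, the first internal Chevalley module 𝔲_α/[𝔲_α,𝔲_α] is minuscule.) -/

import Mathlib

/-!
Induction on the height of `δ`. If `δ ≠ α`, expanding `2 = ⟪δ, δ⟫ = ∑ c_γ(δ) ⟪δ, γ⟫` and using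
`c_α(δ) = 1`, `⟪δ, α⟫ ≤ 1` and `c_γ(δ) ≥ 0` produces a simple root `γ ≠ α` with `⟪δ, γ⟫ > 0`.
Then `s_γ δ = δ - ⟪δ, γ⟫ γ` is a root with the same `α`-coefficient and smaller height, and if
`w α = s_γ δ` then `(s_γ w) α = δ`.
-/

open scoped InnerProductSpace

namespace PaperRS

variable {E : Type*} [NormedAddCommGroup E] [InnerProductSpace ℝ E]

/-- A reduced crystallographic simply-laced root system, normalized so that every root has
squared length `2` (hence `⟪δ, ε⟫` is the Cartan integer `⟨δ, ε^∨⟩`). -/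
structure IsRootSystem (Φ : Set E) : Prop where
  finite : Φ.Finite
  nonzero : (0 : E) ∉ Φ
  span_top : Submodule.span ℝ Φ = ⊤
  norm_two : ∀ α ∈ Φ, ⟪α, α⟫_ℝ = 2
  reduced : ∀ α ∈ Φ, ∀ t : ℝ, t • α ∈ Φ → t = 1 ∨ t = -1
  cartan_int : ∀ α ∈ Φ, ∀ β ∈ Φ, ∃ n : ℤ, ⟪α, β⟫_ℝ = (n : ℝ)
  reflect_mem : ∀ α ∈ Φ, ∀ β ∈ Φ, β - ⟪β, α⟫_ℝ • α ∈ Φ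

/-- Irreducibility: `Φ` is nonempty and cannot be split into two mutually orthogonal parts. -/
def IsIrreducible (Φ : Set E) : Prop :=
  Φ.Nonempty ∧ ∀ Φ₁ Φ₂ : Set E, Φ = Φ₁ ∪ Φ₂ →
    (∀ a ∈ Φ₁, ∀ b ∈ Φ₂, ⟪a, b⟫_ℝ = 0) → Φ₁ = ∅ ∨ Φ₂ = ∅

/-- The reflection in (the hyperplane orthogonal to) a root `α` of squared length `2`. -/
def sRefl (α : E) : Function.End E := fun x => x - ⟪x, α⟫_ℝ • α

/-- The group generated by the reflections in the elements of `S`; since every reflection is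
an involution, the submonoid generated by the reflections coincides with the generated group. -/
def genBy (S : Set E) : Submonoid (Function.End E) :=
  Submonoid.closure (sRefl '' S)

/-- The Weyl group of `Φ`: the group generated by the reflections in all the roots. -/
abbrev WeylGroup (Φ : Set E) : Submonoid (Function.End E) := genBy Φ

/-- A base (set of simple roots) of `Φ`, together with the (unique) integer coefficients
`coeff δ γ` of each root `δ` with respect to the simple roots. -/
structure Base (Φ : Set E) where
  Δ : Finset E
  coeff : E → E → ℤ
  subset : ↑Δ ⊆ Φ
  indep : LinearIndependent ℝ (fun γ : {x : E // x ∈ Δ} => (γ : E))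
  expand : ∀ δ ∈ Φ, δ = ∑ γ ∈ Δ, (coeff δ γ : ℝ) • γ
  sign : ∀ δ ∈ Φ, (∀ γ ∈ Δ, 0 ≤ coeff δ γ) ∨ (∀ γ ∈ Δ, coeff δ γ ≤ 0)

variable {Φ : Set E}

/-- `θ` is the highest root of `Φ` with respect to the base `B`. -/
def IsHighest (B : Base Φ) (θ : E) : Prop :=
  θ ∈ Φ ∧ ∀ δ ∈ Φ, ∀ γ ∈ B.Δ, B.coeff δ γ ≤ B.coeff θ γ

/-- `α` is a Heisenberg simple root: the highest root `θ` has `α`-coefficient `2`, and every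
root other than `±θ` has `α`-coefficient in `{-1, 0, 1}`. -/
def IsHeisenberg (B : Base Φ) (θ α : E) : Prop :=
  B.coeff θ α = 2 ∧
    ∀ δ ∈ Φ, δ ≠ θ → δ ≠ -θ →
      B.coeff δ α = -1 ∨ B.coeff δ α = 0 ∨ B.coeff δ α = 1

/-- `α` is an extreme simple root with (unique) neighbour `β`. -/
def IsExtreme (B : Base Φ) (α β : E) : Prop :=
  β ∈ B.Δ ∧ β ≠ α ∧ ⟪α, β⟫_ℝ ≠ 0 ∧
    ∀ γ ∈ B.Δ, γ ≠ α → ⟪α, γ⟫_ℝ ≠ 0 → γ = β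

/-- `Φ_α`: the roots with `α`-coefficient `1` that are orthogonal to `α`. -/
def PhiSet (B : Base Φ) (α : E) : Set E :=
  {ε ∈ Φ | B.coeff ε α = 1 ∧ ⟪ε, α⟫_ℝ = 0}

/-- `Ψ_α`: the roots `ε` with `α`-coefficient `1` and `⟪ε, α⟫ ≤ 0`. -/
def PsiSet (B : Base Φ) (α : E) : Set E :=
  {ε ∈ Φ | B.coeff ε α = 1 ∧ ⟪ε, α⟫_ℝ ≤ 0}

namespace Base

variable (B : Base Φ)

theorem coeff_eq_of_eq_sum {δ : E} (hδ : δ ∈ Φ) {c : E → ℤ}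
    (h : δ = ∑ γ ∈ B.Δ, (c γ : ℝ) • γ) {γ : E} (hγ : γ ∈ B.Δ) : B.coeff δ γ = c γ := by
  have hsum : ∑ β : B.Δ, ((B.coeff δ β : ℝ) - c β) • (β : E) = 0 := by
    simp only [sub_smul, Finset.sum_sub_distrib]
    rw [Finset.sum_coe_sort B.Δ (fun β => (B.coeff δ β : ℝ) • β),
      Finset.sum_coe_sort B.Δ (fun β => (c β : ℝ) • β), ← h, ← B.expand δ hδ, sub_self]
  have := Fintype.linearIndependent_iff.mp B.indep _ hsum ⟨γ, hγ⟩
  exact_mod_cast sub_eq_zero.mp this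

def height (δ : E) : ℤ := ∑ γ ∈ B.Δ, B.coeff δ γ

theorem coeff_nonneg_of_pos {δ α : E} (hδ : δ ∈ Φ) (hα : α ∈ B.Δ) (hpos : 0 < B.coeff δ α) :
    ∀ γ ∈ B.Δ, 0 ≤ B.coeff δ γ :=
  (B.sign δ hδ).resolve_right fun h => (h α hα).not_gt hpos

theorem one_le_height {δ α : E} (hδ : δ ∈ Φ) (hα : α ∈ B.Δ) (hc : B.coeff δ α = 1) :
    1 ≤ B.height δ :=
  hc ▸ Finset.single_le_sum (B.coeff_nonneg_of_pos hδ hα (by omega)) hα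

theorem inner_eq_sum {δ : E} (hδ : δ ∈ Φ) (x : E) :
    ⟪x, δ⟫_ℝ = ∑ γ ∈ B.Δ, (B.coeff δ γ : ℝ) * ⟪x, γ⟫_ℝ := by
  conv_lhs => rw [B.expand δ hδ]
  simp only [inner_sum, real_inner_smul_right]

open Classical in
theorem coeff_sub_smul {δ γ : E} (hδ : δ ∈ Φ) (hγ : γ ∈ B.Δ) (n : ℤ)
    (hε : δ - (n : ℝ) • γ ∈ Φ) {β : E} (hβ : β ∈ B.Δ) :
    B.coeff (δ - (n : ℝ) • γ) β = B.coeff δ β - if β = γ then n else 0 := by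
  refine B.coeff_eq_of_eq_sum hε (c := fun β => B.coeff δ β - if β = γ then n else 0) ?_ hβ
  simp only [Int.cast_sub, sub_smul, Finset.sum_sub_distrib, ← B.expand δ hδ, Int.cast_ite,
    Int.cast_zero, ite_smul, zero_smul, Finset.sum_ite_eq', if_pos hγ]

theorem height_sub_smul {δ γ : E} (hδ : δ ∈ Φ) (hγ : γ ∈ B.Δ) (n : ℤ)
    (hε : δ - (n : ℝ) • γ ∈ Φ) : B.height (δ - (n : ℝ) • γ) = B.height δ - n := by
  classical
  rw [height, Finset.sum_congr rfl fun β hβ => B.coeff_sub_smul hδ hγ n hε hβ,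
    Finset.sum_sub_distrib, Finset.sum_ite_eq', if_pos hγ, height]

end Base

theorem sRefl_sRefl {γ : E} (hγ : ⟪γ, γ⟫_ℝ = 2) (x : E) : sRefl γ (sRefl γ x) = x := by
  simp only [sRefl, inner_sub_left, real_inner_smul_left, hγ]
  module

theorem sRefl_mem_genBy {S : Set E} {γ : E} (hγ : γ ∈ S) : sRefl γ ∈ genBy S :=
  Submonoid.subset_closure (Set.mem_image_of_mem _ hγ)

namespace IsRootSystem

variable (hΦ : IsRootSystem Φ)
include hΦ

theorem inner_le_one {δ ε : E} (hδ : δ ∈ Φ) (hε : ε ∈ Φ) (hne : δ ≠ ε) : ⟪δ, ε⟫_ℝ ≤ 1 := by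
  obtain ⟨n, hn⟩ := hΦ.cartan_int δ hδ ε hε
  have hpos : 0 < ⟪δ - ε, δ - ε⟫_ℝ := real_inner_self_pos.mpr (sub_ne_zero.mpr hne)
  rw [inner_sub_sub_self, hΦ.norm_two δ hδ, hΦ.norm_two ε hε, real_inner_comm δ ε, hn] at hpos
  have : n < 2 := by exact_mod_cast (by linarith : (n : ℝ) < 2)
  rw [hn]
  exact_mod_cast (by omega : n ≤ 1)

theorem exists_simple_inner_pos (B : Base Φ) {α δ : E} (hα : α ∈ B.Δ) (hδ : δ ∈ Φ)
    (hc : B.coeff δ α = 1) (hne : δ ≠ α) : ∃ γ ∈ B.Δ, γ ≠ α ∧ 0 < ⟪δ, γ⟫_ℝ := by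
  classical
  by_contra! hcon
  have hrest : ∑ γ ∈ B.Δ.erase α, (B.coeff δ γ : ℝ) * ⟪δ, γ⟫_ℝ ≤ 0 :=
    Finset.sum_nonpos fun γ hγ => mul_nonpos_of_nonneg_of_nonpos
      (by exact_mod_cast B.coeff_nonneg_of_pos hδ hα (by omega) γ (Finset.mem_of_mem_erase hγ))
      (hcon γ (Finset.mem_of_mem_erase hγ) (Finset.ne_of_mem_erase hγ))
  have hsplit := hΦ.norm_two δ hδ
  rw [B.inner_eq_sum hδ, ← Finset.add_sum_erase _ _ hα, hc, Int.cast_one, one_mul] at hsplit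
  linarith [hΦ.inner_le_one hδ (B.subset hα) hne]

end IsRootSystem

/-- Every root `δ` with `α`-coefficient `1` lies in the orbit of `α` under the subgroup of the
Weyl group generated by the simple reflections in the simple roots other than `α`. -/
theorem levi_weyl_conjugates_alpha_to_delta
    (hΦ : IsRootSystem Φ) (B : Base Φ)
    {α : E} (hα : α ∈ B.Δ) {δ : E} (hδ : δ ∈ Φ) (hc : B.coeff δ α = 1) :
    ∃ w ∈ genBy ((↑B.Δ : Set E) \ {α}), w α = δ := by
  by_cases hδα : δ = α
  · exact ⟨1, one_mem _, hδα ▸ rfl⟩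
  obtain ⟨γ, hγ, hγα, hpos⟩ := hΦ.exists_simple_inner_pos B hα hδ hc hδα
  obtain ⟨n, hn⟩ := hΦ.cartan_int δ hδ γ (B.subset hγ)
  have hn_pos : 0 < n := by exact_mod_cast hn ▸ hpos
  have hε : sRefl γ δ = δ - (n : ℝ) • γ := by rw [sRefl, hn]
  have hεΦ : δ - (n : ℝ) • γ ∈ Φ := hε ▸ hΦ.reflect_mem γ (B.subset hγ) δ hδ
  have hcε : B.coeff (δ - (n : ℝ) • γ) α = 1 := by
    rw [B.coeff_sub_smul hδ hγ n hεΦ hα, if_neg (Ne.symm hγα), hc, sub_zero]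
  obtain ⟨w, hw, hwα⟩ := levi_weyl_conjugates_alpha_to_delta hΦ B hα hεΦ hcε
  refine ⟨sRefl γ * w, mul_mem (sRefl_mem_genBy ⟨hγ, hγα⟩) hw, ?_⟩
  change sRefl γ (w α) = δ
  rw [hwα, ← hε, sRefl_sRefl (hΦ.norm_two γ (B.subset hγ))]
termination_by (B.height δ).toNat
decreasing_by
  have := B.height_sub_smul hδ hγ n hεΦ
  have := B.one_le_height hεΦ hα hcε
  omega

end PaperRS
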